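/- The modal logics KD and KDB enjoy ULIP; moreover, in each of these logics L, for every formula φ and all finite sets P, Q of propositional variables there exists a uniform Lyndon interpolant θ of (φ,P,Q) in L with d(θ) ≤ d(φ). -/

import Mathlib

/-- Modal formulas: propositional variables, ⊥, →, □. -/
inductive Formula : Type
  | var : ℕ → Formula
  | bot : Formula
  | imp : Formula → Formula → Formula
  | box : Formula → Formula
  deriving DecidableEq

namespace Formula

def neg (φ : Formula) : Formula := φ.imp bot

def top : Formula := neg bot

def and (φ ψ : Formula) : Formula := (φ.imp ψ.neg).neg

def iff (φ ψ : Formula) : Formula := (φ.imp ψ).and (ψ.imp φ)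

def dia (φ : Formula) : Formula := φ.neg.box.neg

/-- Variables occurring positively (`true`) / negatively (`false`). -/
def vsgn : Formula → Bool → Finset ℕ
  | var p, true => {p}
  | var _, false => ∅
  | bot, _ => ∅
  | imp φ ψ, b => vsgn φ (!b) ∪ vsgn ψ b
  | box φ, b => vsgn φ b

def vpos (φ : Formula) : Finset ℕ := vsgn φ true
def vneg (φ : Formula) : Finset ℕ := vsgn φ false
def vars (φ : Formula) : Finset ℕ := vpos φ ∪ vneg φ

/-- Modal depth. -/
def depth : Formula → ℕ
  | var _ => 0
  | bot => 0
  | imp φ ψ => max (depth φ) (depth ψ)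
  | box φ => depth φ + 1

/-- Uniform substitution. -/
def subst (σ : ℕ → Formula) : Formula → Formula
  | var p => σ p
  | bot => bot
  | imp φ ψ => (subst σ φ).imp (subst σ ψ)
  | box φ => (subst σ φ).box

/-- The set of subformulas. -/
def subfmls : Formula → Finset Formula
  | var p => {var p}
  | bot => {bot}
  | imp φ ψ => insert (imp φ ψ) (subfmls φ ∪ subfmls ψ)
  | box φ => insert (box φ) (subfmls φ)

/-- n(φ) = |{ψ : □ψ ∈ Sub(φ)}|. -/
def boxCount (φ : Formula) : ℕ :=
  ((subfmls φ).filter fun ψ => box ψ ∈ subfmls φ).card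

/-- The translation ⋆ : p⋆ = p, ⊥⋆ = ⊥, (φ→ψ)⋆ = φ⋆→ψ⋆, (□φ)⋆ = φ⋆ ∧ □φ⋆. -/
def star : Formula → Formula
  | var p => var p
  | bot => bot
  | imp φ ψ => (star φ).imp (star ψ)
  | box φ => (star φ).and (star φ).box

end Formula

/-- Propositional tautology: true under every valuation treating variables and
boxed formulas as atoms. -/
def Tautology (φ : Formula) : Prop :=
  ∀ v : Formula → Bool, v .bot = false →
    (∀ ψ θ : Formula, v (ψ.imp θ) = (!v ψ || v θ)) → v φ = true

/-- A normal modal logic: contains all tautologies and □(p→q)→(□p→□q), and is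
closed under modus ponens, necessitation and uniform substitution. -/
structure IsNormal (L : Set Formula) : Prop where
  taut : ∀ φ, Tautology φ → φ ∈ L
  axK : ((Formula.var 0).imp (Formula.var 1)).box.imp
      ((Formula.var 0).box.imp (Formula.var 1).box) ∈ L
  mp : ∀ φ ψ : Formula, φ.imp ψ ∈ L → φ ∈ L → ψ ∈ L
  nec : ∀ φ : Formula, φ ∈ L → φ.box ∈ L
  subst_mem : ∀ φ ∈ L, ∀ σ : ℕ → Formula, Formula.subst σ φ ∈ L

/-- The least normal modal logic including `X`. -/
def NormalExt (X : Set Formula) : Set Formula :=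
  ⋂₀ {L : Set Formula | IsNormal L ∧ X ⊆ L}

/-- The least normal modal logic K. -/
def TheoryK : Set Formula := NormalExt ∅

def axT : Formula := (Formula.var 0).box.imp (Formula.var 0)
def ax4 : Formula := (Formula.var 0).box.imp (Formula.var 0).box.box
def axB : Formula := (Formula.var 0).imp (Formula.var 0).dia.box
def axD : Formula := Formula.bot.box.neg
def axGL : Formula := ((Formula.var 0).box.imp (Formula.var 0)).box.imp (Formula.var 0).box
def axGrz : Formula :=
  (((Formula.var 0).imp (Formula.var 0).box).box.imp (Formula.var 0)).box.imp (Formula.var 0)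

def TheoryKD : Set Formula := NormalExt {axD}
def TheoryKT : Set Formula := NormalExt {axT}
def TheoryKB : Set Formula := NormalExt {axB}
def TheoryKDB : Set Formula := NormalExt {axD, axB}
def TheoryKTB : Set Formula := NormalExt {axT, axB}
def TheoryK4 : Set Formula := NormalExt {ax4}
def TheoryS4 : Set Formula := NormalExt {axT, ax4}
def TheoryGL : Set Formula := NormalExt {axGL}
def TheoryGrz : Set Formula := NormalExt {axGrz}

/-- L⋆ := {φ : L ⊢ φ⋆}. -/
def starLogic (L : Set Formula) : Set Formula := {φ | Formula.star φ ∈ L}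

/-- θ is a uniform Lyndon interpolant of (φ, P, Q) in L. -/
def IsULInterpolant (L : Set Formula) (φ : Formula) (P Q : Finset ℕ) (θ : Formula) : Prop :=
  θ.vpos ⊆ φ.vpos \ P ∧ θ.vneg ⊆ φ.vneg \ Q ∧ φ.imp θ ∈ L ∧
    ∀ ψ : Formula, ψ.vpos ∩ P = ∅ → ψ.vneg ∩ Q = ∅ → φ.imp ψ ∈ L → θ.imp ψ ∈ L

/-- The uniform Lyndon interpolation property. -/
def ULIP (L : Set Formula) : Prop :=
  ∀ (φ : Formula) (P Q : Finset ℕ), ∃ θ : Formula, IsULInterpolant L φ P Q θ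

/-- The uniform interpolation property. -/
def UIP (L : Set Formula) : Prop :=
  ∀ (φ : Formula) (P : Finset ℕ), ∃ θ : Formula,
    θ.vars ⊆ φ.vars \ P ∧ φ.imp θ ∈ L ∧
      ∀ ψ : Formula, ψ.vars ∩ P = ∅ → φ.imp ψ ∈ L → θ.imp ψ ∈ L

/-- The Lyndon interpolation property. -/
def LIP (L : Set Formula) : Prop :=
  ∀ φ ψ : Formula, φ.imp ψ ∈ L → ∃ θ : Formula,
    θ.vpos ⊆ φ.vpos ∩ ψ.vpos ∧ θ.vneg ⊆ φ.vneg ∩ ψ.vneg ∧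
      φ.imp θ ∈ L ∧ θ.imp ψ ∈ L

/-- A Kripke model. -/
structure KripkeModel where
  W : Type
  nonempty : Nonempty W
  rel : W → W → Prop
  val : W → ℕ → Prop

/-- Satisfaction in a Kripke model. -/
def KripkeModel.Sat (M : KripkeModel) : Formula → M.W → Prop
  | .var p, w => M.val w p
  | .bot, _ => False
  | .imp φ ψ, w => M.Sat φ w → M.Sat ψ w
  | .box φ, w => ∀ x, M.rel w x → M.Sat φ x

/-- A (P,Q)-formula: v⁺(φ) ⊆ P and v⁻(φ) ⊆ Q. -/
def PQFormula (P Q : Finset ℕ) (φ : Formula) : Prop := φ.vpos ⊆ P ∧ φ.vneg ⊆ Q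

/-- `F n P Q` is a finite list of (P,Q)-formulas of modal depth ≤ n such that every
(P,Q)-formula of modal depth ≤ n is K-provably equivalent to some member. -/
def IsFamily (F : ℕ → Finset ℕ → Finset ℕ → List Formula) : Prop :=
  ∀ (n : ℕ) (P Q : Finset ℕ),
    (∀ φ ∈ F n P Q, PQFormula P Q φ ∧ φ.depth ≤ n) ∧
    ∀ ψ : Formula, PQFormula P Q ψ → ψ.depth ≤ n →
      ∃ φ ∈ F n P Q, Formula.iff φ ψ ∈ TheoryK

/-- Th_n^{(P,Q)}(w) = {φ ∈ F_n^{(P,Q)} : w ⊩ φ}. -/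
def Th (F : ℕ → Finset ℕ → Finset ℕ → List Formula) (M : KripkeModel)
    (n : ℕ) (P Q : Finset ℕ) (w : M.W) : Set Formula :=
  {φ | φ ∈ F n P Q ∧ M.Sat φ w}

def conjList : List Formula → Formula
  | [] => Formula.top
  | φ :: l => φ.and (conjList l)

open Classical in
/-- C_n^{(P,Q)}(w) = ⋀ Th_n^{(P,Q)}(w). -/
noncomputable def Cfml (F : ℕ → Finset ℕ → Finset ℕ → List Formula) (M : KripkeModel)
    (n : ℕ) (P Q : Finset ℕ) (w : M.W) : Formula :=
  conjList ((F n P Q).filter fun φ => decide (M.Sat φ w))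

/-- Layered (P,Q)-bisimulation between M and M'. -/
def LayeredBisim (P Q : Finset ℕ) (M M' : KripkeModel)
    (Z : M.W → ℕ → M'.W → Prop) : Prop :=
  (∀ w n w', Z w n w' →
    (∀ p ∈ P, M.val w p → M'.val w' p) ∧ (∀ q ∈ Q, ¬M.val w q → ¬M'.val w' q)) ∧
  (∀ w n w', Z w (n + 1) w' → ∀ x, M.rel w x → ∃ x', M'.rel w' x' ∧ Z x n x') ∧
  (∀ w n w', Z w (n + 1) w' → ∀ x', M'.rel w' x' → ∃ x, M.rel w x ∧ Z x n x')

/-- Downward closedness of a layered bisimulation. -/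
def DownClosed (M M' : KripkeModel) (Z : M.W → ℕ → M'.W → Prop) : Prop :=
  ∀ w n w', Z w n w' → ∀ m ≤ n, Z w m w'

/-- A class of Kripke models has ULIP. -/
def ClassULIP (F : ℕ → Finset ℕ → Finset ℕ → List Formula) (Cl : Set KripkeModel) : Prop :=
  ∀ P1 P2 P3 Q1 Q2 Q3 : Finset ℕ,
    Disjoint P1 P2 → Disjoint P1 P3 → Disjoint P2 P3 →
    Disjoint Q1 Q2 → Disjoint Q1 Q3 → Disjoint Q2 Q3 →
    ∀ M : KripkeModel, M ∈ Cl → ∀ M' : KripkeModel, M' ∈ Cl →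
    ∀ w : M.W, ∀ w' : M'.W, ∀ m n : ℕ,
      Th F M n P2 Q2 w ⊆ Th F M' n P2 Q2 w' →
      ∃ Mst : KripkeModel, Mst ∈ Cl ∧ ∃ wst : Mst.W,
        Th F M n (P1 ∪ P2) (Q1 ∪ Q2) w ⊆ Th F Mst n (P1 ∪ P2) (Q1 ∪ Q2) wst ∧
        Th F Mst m (P2 ∪ P3) (Q2 ∪ Q3) wst ⊆ Th F M' m (P2 ∪ P3) (Q2 ∪ Q3) w'

/-!
KD and KDB are complete for serial, resp. serial symmetric, Kripke models (canonical model).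
Over finitely many atoms there are only finitely many characteristic formulas of depth `n`, and a
world satisfies the `(P, Q)`-characteristic formula of `w` exactly when a layered
`(P, Q)`-simulation of depth `n` links `w` to it; such simulations transfer `(P, Q)`-formulas of
depth at most `n`. The interpolant of `(φ, P, Q)` is the disjunction of the depth-`d(φ)`
characteristic formulas over `(v⁺(φ) ∖ P, v⁻(φ) ∖ Q)` of all worlds satisfying `φ`. It implies
every admissible consequence of `φ` because both model classes amalgamate layered simulations.
-/

open Formula

namespace Tautology

section Eval

variable {v : Formula → Bool} (h0 : v .bot = false)
  (hv : ∀ ψ θ : Formula, v (ψ.imp θ) = (!v ψ || v θ))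
include h0 hv

lemma eval_neg (a : Formula) : v a.neg = !v a := by
  simp [Formula.neg, hv, h0]

lemma eval_and (a b : Formula) : v (a.and b) = (v a && v b) := by
  simp [Formula.and, eval_neg h0 hv, hv]

lemma eval_conjList (l : List Formula) : v (conjList l) = l.all v := by
  induction l with
  | nil => simp [conjList, Formula.top, eval_neg h0 hv, h0]
  | cons a l ih => simp [conjList, eval_and h0 hv, ih]

end Eval

lemma conjList_imp_of_mem {l : List Formula} {φ : Formula} (h : φ ∈ l) :
    Tautology ((conjList l).imp φ) := by
  intro v h0 hv
  cases hφ : v φ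
  · simp only [hv, eval_conjList h0 hv, hφ, Bool.or_false, Bool.not_eq_true',
      List.all_eq_false]
    exact ⟨φ, h, by simp [hφ]⟩
  · simp [hv, hφ]

end Tautology

namespace IsNormal

variable {L : Set Formula} (hL : IsNormal L) {a b c : Formula}
include hL

lemma mp_taut (ht : Tautology (a.imp b)) (ha : a ∈ L) : b ∈ L :=
  hL.mp _ _ (hL.taut _ ht) ha

lemma mp_taut₂ (ht : Tautology (a.imp (b.imp c))) (ha : a ∈ L) (hb : b ∈ L) : c ∈ L :=
  hL.mp _ _ (hL.mp_taut ht ha) hb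

lemma top_mem : Formula.top ∈ L :=
  hL.taut _ fun v h0 hv => by simp [Formula.top, Tautology.eval_neg h0 hv, h0]

lemma axK_mem (a b : Formula) : (a.imp b).box.imp (a.box.imp b.box) ∈ L :=
  hL.subst_mem _ hL.axK fun | 0 => a | _ => b

lemma conjList_map_box_imp {l : List Formula} {φ : Formula} (h : (conjList l).imp φ ∈ L) :
    (conjList (l.map box)).imp φ.box ∈ L := by
  induction l generalizing φ with
  | nil =>
    have hφ : φ ∈ L := hL.mp _ _ h hL.top_mem
    exact hL.mp_taut (fun v h0 hv => by simp only [hv]; cases v φ.box <;> simp) (hL.nec _ hφ)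
  | cons a l ih =>
    have hcurry : (conjList l).imp (a.imp φ) ∈ L := hL.mp_taut (fun v h0 hv => by
      simp only [conjList, hv, Tautology.eval_and h0 hv]; cases v a <;> cases v φ <;> simp) h
    refine hL.mp_taut₂ (fun v h0 hv => ?_) (ih hcurry) (hL.axK_mem a φ)
    simp only [List.map_cons, conjList, hv, Tautology.eval_and h0 hv]
    cases v a.box <;> cases v φ.box <;> cases v (a.imp φ).box <;> simp

end IsNormal

lemma mem_normalExt {X : Set Formula} {φ : Formula} :
    φ ∈ NormalExt X ↔ ∀ L : Set Formula, IsNormal L → X ⊆ L → φ ∈ L := by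
  simp [NormalExt, Set.mem_sInter, and_imp]

lemma isNormal_normalExt (X : Set Formula) : IsNormal (NormalExt X) where
  taut φ h := mem_normalExt.2 fun _ hL _ => hL.taut φ h
  axK := mem_normalExt.2 fun _ hL _ => hL.axK
  mp φ ψ h1 h2 := mem_normalExt.2 fun L hL hX =>
    hL.mp φ ψ (mem_normalExt.1 h1 L hL hX) (mem_normalExt.1 h2 L hL hX)
  nec φ h := mem_normalExt.2 fun L hL hX => hL.nec φ (mem_normalExt.1 h L hL hX)
  subst_mem φ h σ := mem_normalExt.2 fun L hL hX => hL.subst_mem φ (mem_normalExt.1 h L hL hX) σ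

lemma subset_normalExt (X : Set Formula) : X ⊆ NormalExt X :=
  fun _ h => mem_normalExt.2 fun _ _ hX => hX h

lemma normalExt_subset {X L : Set Formula} (hL : IsNormal L) (hX : X ⊆ L) :
    NormalExt X ⊆ L :=
  fun _ h => mem_normalExt.1 h L hL hX

def disjList : List Formula → Formula
  | [] => Formula.bot
  | φ :: l => φ.neg.imp (disjList l)

namespace KripkeModel

variable {M : KripkeModel} {w : M.W} {a b : Formula}

@[simp] lemma sat_var {p : ℕ} : M.Sat (.var p) w ↔ M.val w p := Iff.rfl

@[simp] lemma sat_bot : ¬M.Sat Formula.bot w := id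

@[simp] lemma sat_imp : M.Sat (a.imp b) w ↔ (M.Sat a w → M.Sat b w) := Iff.rfl

@[simp] lemma sat_box : M.Sat a.box w ↔ ∀ x, M.rel w x → M.Sat a x := Iff.rfl

@[simp] lemma sat_neg : M.Sat a.neg w ↔ ¬M.Sat a w := Iff.rfl

@[simp] lemma sat_and : M.Sat (a.and b) w ↔ M.Sat a w ∧ M.Sat b w := by
  simp [Formula.and]

@[simp] lemma sat_dia : M.Sat a.dia w ↔ ∃ x, M.rel w x ∧ M.Sat a x := by
  simp [Formula.dia]

@[simp] lemma sat_conjList {l : List Formula} : M.Sat (conjList l) w ↔ ∀ χ ∈ l, M.Sat χ w := by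
  induction l with
  | nil => simp [conjList, Formula.top]
  | cons a l ih => simp [conjList, ih]

@[simp] lemma sat_disjList {l : List Formula} : M.Sat (disjList l) w ↔ ∃ χ ∈ l, M.Sat χ w := by
  induction l with
  | nil => simp [disjList]
  | cons a l ih =>
    simp only [disjList, sat_imp, sat_neg, ih, List.exists_mem_cons_iff]
    tauto

lemma sat_subst (σ : ℕ → Formula) (φ : Formula) (w : M.W) :
    M.Sat (φ.subst σ) w ↔ KripkeModel.Sat { M with val := fun v p => M.Sat (σ p) v } φ w := by
  induction φ generalizing w <;> simp_all [Formula.subst, KripkeModel.Sat]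

end KripkeModel

def ValidIn (Cl : Set KripkeModel) (φ : Formula) : Prop := ∀ M ∈ Cl, ∀ w, M.Sat φ w

lemma validIn_of_mem_normalExt {Cl : Set KripkeModel} {X : Set Formula}
    (hCl : ∀ M ∈ Cl, ∀ val : M.W → ℕ → Prop, { M with val } ∈ Cl)
    (hX : ∀ φ ∈ X, ValidIn Cl φ) {φ : Formula} (hφ : φ ∈ NormalExt X) : ValidIn Cl φ := by
  refine normalExt_subset (L := {φ | ValidIn Cl φ}) ⟨?_, ?_, ?_, ?_, ?_⟩ hX hφ
  · intro φ h M _ w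
    classical
    simpa using h (fun ψ => decide (M.Sat ψ w)) (by simp) fun ψ θ => by
      by_cases M.Sat ψ w <;> simp [*]
  · exact fun M _ w h₁ h₂ x hx => h₁ x hx (h₂ x hx)
  · exact fun φ ψ h₁ h₂ M hM w => h₁ M hM w (h₂ M hM w)
  · exact fun φ h M hM w x _ => h M hM x
  · exact fun φ h σ M hM w => (KripkeModel.sat_subst σ φ w).2
      (h _ (hCl M hM fun v p => M.Sat (σ p) v) w)

def serialModels : Set KripkeModel := {M | ∀ w, ∃ x, M.rel w x}

def serialSymmModels : Set KripkeModel :=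
  {M | (∀ w, ∃ x, M.rel w x) ∧ ∀ w x, M.rel w x → M.rel x w}

lemma validIn_axD {Cl : Set KripkeModel} (hCl : ∀ M ∈ Cl, ∀ w, ∃ x, M.rel w x) :
    ValidIn Cl axD := fun M hM w h =>
  let ⟨x, hx⟩ := hCl M hM w
  h x hx

lemma validIn_axB {Cl : Set KripkeModel} (hCl : ∀ M ∈ Cl, ∀ w x, M.rel w x → M.rel x w) :
    ValidIn Cl axB := fun M hM w h x hx => by
  simpa [axB] using ⟨w, hCl M hM w x hx, h⟩


def Derives (L Γ : Set Formula) (φ : Formula) : Prop :=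
  ∃ l : List Formula, (∀ χ ∈ l, χ ∈ Γ) ∧ (conjList l).imp φ ∈ L

def Consistent (L Γ : Set Formula) : Prop := ¬Derives L Γ Formula.bot

def MaxConsistent (L Γ : Set Formula) : Prop := Maximal (Consistent L) Γ

namespace Derives

variable {L Γ Δ : Set Formula} {φ ψ χ : Formula}

lemma mono (h : Derives L Γ φ) (hΓΔ : Γ ⊆ Δ) : Derives L Δ φ :=
  let ⟨l, hl, hφ⟩ := h
  ⟨l, fun χ hχ => hΓΔ (hl χ hχ), hφ⟩

variable (hL : IsNormal L)
include hL

lemma of_mem (h : φ ∈ Γ) : Derives L Γ φ :=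
  ⟨[φ], by simpa using h, hL.taut _ (Tautology.conjList_imp_of_mem (List.mem_singleton_self φ))⟩

lemma of_mem_logic (h : φ ∈ L) : Derives L Γ φ :=
  ⟨[], by simp, hL.mp_taut (fun v h0 hv => by simp only [hv]; cases v φ <;> simp) h⟩

lemma mp (h₁ : Derives L Γ (φ.imp ψ)) (h₂ : Derives L Γ φ) : Derives L Γ ψ := by
  obtain ⟨l₁, hl₁, hφψ⟩ := h₁
  obtain ⟨l₂, hl₂, hφ⟩ := h₂
  refine ⟨l₁ ++ l₂, fun χ hχ => (List.mem_append.1 hχ).elim (hl₁ χ) (hl₂ χ),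
    hL.mp_taut₂ (fun v h0 hv => ?_) hφψ hφ⟩
  simp only [hv, Tautology.eval_conjList h0 hv, List.all_append]
  cases l₁.all v <;> cases l₂.all v <;> cases v φ <;> cases v ψ <;> simp

lemma imp_of_insert (h : Derives L (insert χ Γ) φ) : Derives L Γ (χ.imp φ) := by
  obtain ⟨l, hl, hφ⟩ := h
  refine ⟨l.filter (· ≠ χ), fun θ hθ => ?_, hL.mp_taut (fun v h0 hv => ?_) hφ⟩
  · obtain ⟨hθl, hθχ⟩ := List.mem_filter.1 hθ
    exact (hl θ hθl).resolve_left (by simpa using hθχ)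
  · have hall : (l.filter (· ≠ χ)).all v = true → v χ = true → l.all v = true := by
      simp only [List.all_eq_true, List.mem_filter]
      intro hrest hχ θ hθ
      by_cases hθχ : θ = χ
      · exact hθχ ▸ hχ
      · exact hrest θ ⟨hθ, by simpa using hθχ⟩
    simp only [hv, Tautology.eval_conjList h0 hv]
    revert hall
    cases l.all v <;> cases (l.filter (· ≠ χ)).all v <;> cases v χ <;> cases v φ <;> simp

end Derives

lemma isOfFiniteCharacter_consistent (L : Set Formula) :
    Order.IsOfFiniteCharacter {Γ | Consistent L Γ} := by
  refine fun Γ => ⟨fun h Δ hΔ _ hder => h (hder.mono hΔ), fun h ⟨l, hl, hbot⟩ => ?_⟩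
  exact h {χ | χ ∈ l} (fun χ hχ => hl χ hχ) l.finite_toSet ⟨l, fun _ => id, hbot⟩

lemma exists_maxConsistent_superset {L Γ : Set Formula} (h : Consistent L Γ) :
    ∃ Δ, Γ ⊆ Δ ∧ MaxConsistent L Δ :=
  (isOfFiniteCharacter_consistent L).exists_maximal h

namespace MaxConsistent

variable {L Γ : Set Formula} (hΓ : MaxConsistent L Γ) {φ ψ : Formula}
include hΓ

variable (hL : IsNormal L)
include hL

lemma derives_neg_of_not_mem (h : φ ∉ Γ) : Derives L Γ φ.neg :=
  .imp_of_insert hL <| not_not.1 fun hc => h (hΓ.2 hc (Set.subset_insert φ Γ) (Set.mem_insert φ Γ))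

lemma mem_of_derives (h : Derives L Γ φ) : φ ∈ Γ :=
  by_contra fun hφ => hΓ.1 ((hΓ.derives_neg_of_not_mem hL hφ).mp hL h)

lemma subset_of_logic : L ⊆ Γ :=
  fun _ h => hΓ.mem_of_derives hL (.of_mem_logic hL h)

lemma bot_not_mem : Formula.bot ∉ Γ :=
  fun h => hΓ.1 (.of_mem hL h)

lemma neg_mem (h : φ ∉ Γ) : φ.neg ∈ Γ :=
  hΓ.mem_of_derives hL (hΓ.derives_neg_of_not_mem hL h)

lemma imp_mem_iff : φ.imp ψ ∈ Γ ↔ (φ ∈ Γ → ψ ∈ Γ) := by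
  refine ⟨fun h hφ => hΓ.mem_of_derives hL ((Derives.of_mem hL h).mp hL (.of_mem hL hφ)),
    fun h => hΓ.mem_of_derives hL ?_⟩
  by_cases hφ : φ ∈ Γ
  · refine (Derives.of_mem_logic hL (hL.taut _ fun v h0 hv => ?_)).mp hL (.of_mem hL (h hφ))
    simp only [hv]; cases v φ <;> cases v ψ <;> simp
  · refine (Derives.of_mem_logic hL (hL.taut _ fun v h0 hv => ?_)).mp hL
      (.of_mem hL (hΓ.neg_mem hL hφ))
    simp only [hv, Tautology.eval_neg h0 hv]; cases v φ <;> cases v ψ <;> simp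

end MaxConsistent

/-- The nonemptiness witness is an argument: an inconsistent `L` has no maximal consistent sets. -/
def canonicalModel (L : Set Formula) (hne : Nonempty {Γ // MaxConsistent L Γ}) :
    KripkeModel where
  W := {Γ // MaxConsistent L Γ}
  nonempty := hne
  rel Γ Δ := ∀ φ, φ.box ∈ Γ.1 → φ ∈ Δ.1
  val Γ p := Formula.var p ∈ Γ.1

section Canonical

variable {L : Set Formula} (hL : IsNormal L)
include hL

lemma exists_maxConsistent_of_box_not_mem {Γ : Set Formula} (hΓ : MaxConsistent L Γ)
    {φ : Formula} (hφ : φ.box ∉ Γ) :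
    ∃ Δ, MaxConsistent L Δ ∧ (∀ ψ, ψ.box ∈ Γ → ψ ∈ Δ) ∧ φ ∉ Δ := by
  have hcon : Consistent L (insert φ.neg {ψ | ψ.box ∈ Γ}) := by
    intro hder
    obtain ⟨l, hl, hbot⟩ := Derives.imp_of_insert hL hder
    have hφl : (conjList l).imp φ ∈ L := hL.mp_taut (fun v h0 hv => by
      simp only [hv, Tautology.eval_neg h0 hv, h0]
      cases v (conjList l) <;> cases v φ <;> simp) hbot
    refine hφ (hΓ.mem_of_derives hL ⟨l.map box, ?_, hL.conjList_map_box_imp hφl⟩)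
    simpa using hl
  obtain ⟨Δ, hsub, hΔ⟩ := exists_maxConsistent_superset hcon
  exact ⟨Δ, hΔ, fun ψ hψ => hsub (Set.mem_insert_of_mem _ hψ), fun hφΔ =>
    hΔ.bot_not_mem hL ((hΔ.imp_mem_iff hL).1 (hsub (Set.mem_insert _ _)) hφΔ)⟩

lemma canonicalModel_sat_iff (hne : Nonempty {Γ // MaxConsistent L Γ}) (φ : Formula)
    (Γ : {Γ // MaxConsistent L Γ}) : (canonicalModel L hne).Sat φ Γ ↔ φ ∈ Γ.1 := by
  induction φ generalizing Γ with
  | var p => rfl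
  | bot => exact iff_of_false id (Γ.2.bot_not_mem hL)
  | imp a b iha ihb => exact (imp_congr (iha Γ) (ihb Γ)).trans (Γ.2.imp_mem_iff hL).symm
  | box a iha =>
    refine ⟨fun h => by_contra fun ha => ?_, fun h Δ hΓΔ => (iha Δ).2 (hΓΔ a h)⟩
    obtain ⟨Δ, hΔ, hΓΔ, haΔ⟩ := exists_maxConsistent_of_box_not_mem hL Γ.2 ha
    exact haΔ ((iha ⟨Δ, hΔ⟩).1 (h ⟨Δ, hΔ⟩ hΓΔ))

lemma exists_canonicalModel_not_sat {φ : Formula} (hφ : φ ∉ L) :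
    ∃ (hne : Nonempty {Γ // MaxConsistent L Γ}) (Γ : {Γ // MaxConsistent L Γ}),
      ¬(canonicalModel L hne).Sat φ Γ := by
  have hcon : Consistent L {φ.neg} := fun hder => by
    obtain ⟨l, hl, hbot⟩ := Derives.imp_of_insert hL
      (hder.mono (Set.singleton_subset_iff.2 (Set.mem_insert φ.neg ∅)))
    obtain rfl : l = [] := List.eq_nil_iff_forall_not_mem.2 hl
    exact hφ (hL.mp_taut₂ (fun v h0 hv => by
      simp only [hv, Tautology.eval_neg h0 hv, h0, conjList, Formula.top]; cases v φ <;> simp)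
      hbot hL.top_mem)
  obtain ⟨Δ, hsub, hΔ⟩ := exists_maxConsistent_superset hcon
  refine ⟨⟨⟨Δ, hΔ⟩⟩, ⟨Δ, hΔ⟩, fun hsat => ?_⟩
  rw [canonicalModel_sat_iff hL] at hsat
  exact hΔ.bot_not_mem hL ((hΔ.imp_mem_iff hL).1 (hsub rfl) hsat)

lemma canonicalModel_serial (hD : axD ∈ L) (hne : Nonempty {Γ // MaxConsistent L Γ})
    (Γ : {Γ // MaxConsistent L Γ}) : ∃ Δ, (canonicalModel L hne).rel Γ Δ := by
  have hbot : Formula.bot.box ∉ Γ.1 := fun h =>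
    Γ.2.bot_not_mem hL ((Γ.2.imp_mem_iff hL).1 (Γ.2.subset_of_logic hL hD) h)
  obtain ⟨Δ, hΔ, hΓΔ, -⟩ := exists_maxConsistent_of_box_not_mem hL Γ.2 hbot
  exact ⟨⟨Δ, hΔ⟩, hΓΔ⟩

end Canonical
lemma canonicalModel_symm {L : Set Formula} (hL : IsNormal L) (hB : axB ∈ L)
    (hne : Nonempty {Γ // MaxConsistent L Γ}) (Γ Δ : {Γ // MaxConsistent L Γ})
    (hΓΔ : (canonicalModel L hne).rel Γ Δ) : (canonicalModel L hne).rel Δ Γ := by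
  intro φ hφ
  rw [← canonicalModel_sat_iff hL hne]
  by_contra hnφ
  have hBφ : φ.neg.imp φ.neg.dia.box ∈ Γ.1 :=
    Γ.2.subset_of_logic hL (hL.subst_mem _ hB fun _ => φ.neg)
  rw [← canonicalModel_sat_iff hL hne] at hBφ hφ
  obtain ⟨Γ', hΔΓ', hnφ'⟩ := KripkeModel.sat_dia.1 (hBφ hnφ Δ hΓΔ)
  exact hnφ' (hφ Γ' hΔΓ')

lemma mem_theoryKD_iff {φ : Formula} : φ ∈ TheoryKD ↔ ValidIn serialModels φ := by
  refine ⟨validIn_of_mem_normalExt (fun _ hM _ => hM)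
    (by simpa using validIn_axD (Cl := serialModels) fun _ => id), fun h => by_contra fun hφ => ?_⟩
  have hL := isNormal_normalExt {axD}
  obtain ⟨hne, Γ, hΓ⟩ := exists_canonicalModel_not_sat hL hφ
  exact hΓ (h (canonicalModel _ hne) (canonicalModel_serial hL (subset_normalExt _ rfl) hne) Γ)

lemma mem_theoryKDB_iff {φ : Formula} : φ ∈ TheoryKDB ↔ ValidIn serialSymmModels φ := by
  refine ⟨validIn_of_mem_normalExt (fun _ hM _ => hM) ?_, fun h => by_contra fun hφ => ?_⟩
  · rintro _ (rfl | rfl)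
    exacts [validIn_axD fun _ hM => hM.1, validIn_axB fun _ hM => hM.2]
  have hL := isNormal_normalExt {axD, axB}
  obtain ⟨hne, Γ, hΓ⟩ := exists_canonicalModel_not_sat hL hφ
  exact hΓ (h (canonicalModel _ hne)
    ⟨canonicalModel_serial hL (subset_normalExt _ (.inl rfl)) hne,
      canonicalModel_symm hL (subset_normalExt _ (.inr rfl)) hne⟩ Γ)

section PQFormula

variable {P Q : Finset ℕ} {a b : Formula}

@[simp] lemma pqFormula_var {p : ℕ} : PQFormula P Q (.var p) ↔ p ∈ P := by
  simp [PQFormula, vpos, vneg, vsgn]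

@[simp] lemma pqFormula_bot : PQFormula P Q .bot := by
  simp [PQFormula, vpos, vneg, vsgn]

@[simp] lemma pqFormula_imp : PQFormula P Q (a.imp b) ↔ PQFormula Q P a ∧ PQFormula P Q b := by
  simp only [PQFormula, vpos, vneg, vsgn, Bool.not_true, Bool.not_false, Finset.union_subset_iff]
  tauto

@[simp] lemma pqFormula_box : PQFormula P Q a.box ↔ PQFormula P Q a := by
  simp [PQFormula, vpos, vneg, vsgn]

@[simp] lemma pqFormula_neg : PQFormula P Q a.neg ↔ PQFormula Q P a := by
  simp [Formula.neg]

@[simp] lemma pqFormula_and : PQFormula P Q (a.and b) ↔ PQFormula P Q a ∧ PQFormula P Q b := by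
  simp [Formula.and]

@[simp] lemma pqFormula_dia : PQFormula P Q a.dia ↔ PQFormula P Q a := by
  simp [Formula.dia]

@[simp] lemma pqFormula_conjList {l : List Formula} :
    PQFormula P Q (conjList l) ↔ ∀ χ ∈ l, PQFormula P Q χ := by
  induction l with
  | nil => simp [conjList, Formula.top]
  | cons a l ih => simp [conjList, ih]

@[simp] lemma pqFormula_disjList {l : List Formula} :
    PQFormula P Q (disjList l) ↔ ∀ χ ∈ l, PQFormula P Q χ := by
  induction l with
  | nil => simp [disjList]
  | cons a l ih => simp [disjList, ih]

end PQFormula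

namespace Formula

@[simp] lemma depth_neg (a : Formula) : a.neg.depth = a.depth := by simp [Formula.neg, depth]

@[simp] lemma depth_and (a b : Formula) : (a.and b).depth = max a.depth b.depth := by
  simp [Formula.and, depth]

@[simp] lemma depth_dia (a : Formula) : a.dia.depth = a.depth + 1 := by
  simp [Formula.dia, depth]

lemma depth_conjList_le {l : List Formula} {n : ℕ} (h : ∀ χ ∈ l, χ.depth ≤ n) :
    (conjList l).depth ≤ n := by
  induction l with
  | nil => simp [conjList, Formula.top, depth]
  | cons a l ih => simpa [conjList] using ⟨h a (by simp), ih fun χ hχ => h χ (by simp [hχ])⟩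

lemma depth_disjList_le {l : List Formula} {n : ℕ} (h : ∀ χ ∈ l, χ.depth ≤ n) :
    (disjList l).depth ≤ n := by
  induction l with
  | nil => simp [disjList, depth]
  | cons a l ih => simpa [disjList, depth] using ⟨h a (by simp), ih fun χ hχ => h χ (by simp [hχ])⟩

noncomputable def literals (A B : Finset ℕ) : Formula :=
  conjList (A.toList.map var ++ B.toList.map fun q => (var q).neg)

noncomputable def layer (χ : Formula) (S : Finset Formula) : Formula :=
  χ.and ((conjList (S.toList.map dia)).and (disjList S.toList).box)

@[simp] lemma pqFormula_literals {P Q A B : Finset ℕ} :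
    PQFormula P Q (literals A B) ↔ A ⊆ P ∧ B ⊆ Q := by
  simp [literals, Finset.subset_iff, or_imp, forall_and]

lemma depth_literals (A B : Finset ℕ) : (literals A B).depth = 0 :=
  Nat.le_zero.1 <| depth_conjList_le fun χ hχ => by
    simp only [List.mem_append, List.mem_map] at hχ
    rcases hχ with ⟨p, -, rfl⟩ | ⟨q, -, rfl⟩ <;> simp [depth]

end Formula

/-- A finite pool containing every depth-`n` characteristic formula over `(P, Q)`; it keeps the
successor sets in `KripkeModel.charFml` finite. -/
noncomputable def charFormulas (P Q : Finset ℕ) : ℕ → Finset Formula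
  | 0 => (P.powerset ×ˢ Q.powerset).image fun AB => literals AB.1 AB.2
  | n + 1 => (charFormulas P Q 0 ×ˢ (charFormulas P Q n).powerset).image fun χS => χS.1.layer χS.2

lemma pqFormula_depth_of_mem_charFormulas {P Q : Finset ℕ} :
    ∀ {n : ℕ} {χ : Formula}, χ ∈ charFormulas P Q n → PQFormula P Q χ ∧ χ.depth ≤ n
  | 0, χ, h => by
    rw [charFormulas, Finset.mem_image] at h
    obtain ⟨⟨A, B⟩, hAB, rfl⟩ := h
    simpa [depth_literals] using hAB
  | n + 1, χ, h => by
    rw [charFormulas, Finset.mem_image] at h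
    obtain ⟨⟨χ₀, S⟩, hχS, rfl⟩ := h
    simp only [Finset.mem_product, Finset.mem_powerset] at hχS
    have hχ₀ := pqFormula_depth_of_mem_charFormulas (n := 0) hχS.1
    have hS σ (hσ : σ ∈ S) := pqFormula_depth_of_mem_charFormulas (hχS.2 hσ)
    refine ⟨by simpa [layer, hχ₀.1] using fun σ hσ => (hS σ hσ).1, ?_⟩
    simp only [layer, depth_and, depth, max_le_iff]
    refine ⟨by omega, depth_conjList_le ?_, Nat.succ_le_succ (depth_disjList_le fun σ hσ => ?_)⟩
    · simp only [List.mem_map, Finset.mem_toList]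
      rintro _ ⟨σ, hσ, rfl⟩
      simpa using (hS σ hσ).2
    · exact (hS σ (Finset.mem_toList.1 hσ)).2

namespace KripkeModel

section

variable {M : KripkeModel} {w : M.W} {A B : Finset ℕ} {χ : Formula} {S : Finset Formula}

@[simp] lemma sat_literals :
    M.Sat (literals A B) w ↔ (∀ p ∈ A, M.val w p) ∧ ∀ q ∈ B, ¬M.val w q := by
  simp [literals, or_imp, forall_and]

@[simp] lemma sat_layer :
    M.Sat (χ.layer S) w ↔ M.Sat χ w ∧ (∀ σ ∈ S, ∃ x, M.rel w x ∧ M.Sat σ x) ∧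
      ∀ x, M.rel w x → ∃ σ ∈ S, M.Sat σ x := by
  simp [layer]

end

variable (M : KripkeModel) (P Q : Finset ℕ)

open Classical in
noncomputable def literalsAt (w : M.W) : Formula :=
  literals (P.filter (M.val w ·)) (Q.filter (¬M.val w ·))

open Classical in
noncomputable def charFml : ℕ → M.W → Formula
  | 0, w => M.literalsAt P Q w
  | n + 1, w => (M.literalsAt P Q w).layer
      ((charFormulas P Q n).filter fun χ => ∃ x, M.rel w x ∧ charFml n x = χ)

variable {M P Q} {N : KripkeModel} {w : M.W} {v : N.W}

lemma charFml_mem_charFormulas : ∀ (n : ℕ) (w : M.W), M.charFml P Q n w ∈ charFormulas P Q n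
  | 0, w => by
    classical
    rw [charFml, literalsAt, charFormulas, Finset.mem_image]
    exact ⟨(_, _), Finset.mem_product.2 ⟨Finset.mem_powerset.2 (Finset.filter_subset _ _),
      Finset.mem_powerset.2 (Finset.filter_subset _ _)⟩, rfl⟩
  | n + 1, w => by
    classical
    rw [charFml, charFormulas, Finset.mem_image]
    exact ⟨(_, _), Finset.mem_product.2 ⟨charFml_mem_charFormulas 0 w,
      Finset.mem_powerset.2 (Finset.filter_subset _ _)⟩, rfl⟩

lemma sat_literalsAt_iff : N.Sat (M.literalsAt P Q w) v ↔
    (∀ p ∈ P, M.val w p → N.val v p) ∧ ∀ q ∈ Q, ¬M.val w q → ¬N.val v q := by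
  simp [literalsAt]

lemma sat_charFml_succ_iff {n : ℕ} : N.Sat (M.charFml P Q (n + 1) w) v ↔
    N.Sat (M.literalsAt P Q w) v ∧
      (∀ x, M.rel w x → ∃ y, N.rel v y ∧ N.Sat (M.charFml P Q n x) y) ∧
      ∀ y, N.rel v y → ∃ x, M.rel w x ∧ N.Sat (M.charFml P Q n x) y := by
  simp only [charFml, sat_layer, Finset.mem_filter]
  refine and_congr_right fun _ => and_congr ⟨fun h x hx => ?_, ?_⟩ ⟨fun h y hy => ?_, ?_⟩
  · exact h _ ⟨charFml_mem_charFormulas n x, x, hx, rfl⟩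
  · rintro h _ ⟨-, x, hx, rfl⟩
    exact h x hx
  · obtain ⟨_, ⟨-, x, hx, rfl⟩, hxy⟩ := h y hy
    exact ⟨x, hx, hxy⟩
  · intro h y hy
    obtain ⟨x, hx, hxy⟩ := h y hy
    exact ⟨_, ⟨charFml_mem_charFormulas n x, x, hx, rfl⟩, hxy⟩

lemma sat_literalsAt_of_sat_charFml {n : ℕ} (h : N.Sat (M.charFml P Q n w) v) :
    N.Sat (M.literalsAt P Q w) v := by
  cases n with
  | zero => exact h
  | succ n => exact (sat_charFml_succ_iff.1 h).1

lemma sat_charFml_self (n : ℕ) (w : M.W) : M.Sat (M.charFml P Q n w) w := by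
  induction n generalizing w with
  | zero => exact sat_literalsAt_iff.2 ⟨fun _ _ => id, fun _ _ => id⟩
  | succ n ih =>
    exact sat_charFml_succ_iff.2 ⟨sat_literalsAt_iff.2 ⟨fun _ _ => id, fun _ _ => id⟩,
      fun x hx => ⟨x, hx, ih x⟩, fun x hx => ⟨x, hx, ih x⟩⟩

lemma layeredBisim_sat_charFml :
    LayeredBisim P Q M N fun w n v => N.Sat (M.charFml P Q n w) v :=
  ⟨fun _ _ _ h => sat_literalsAt_iff.1 (sat_literalsAt_of_sat_charFml h),
    fun _ _ _ h => (sat_charFml_succ_iff.1 h).2.1,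
    fun _ _ _ h => (sat_charFml_succ_iff.1 h).2.2⟩

end KripkeModel

lemma LayeredBisim.sat_transfer {P Q : Finset ℕ} {M M' : KripkeModel}
    {Z : M.W → ℕ → M'.W → Prop} (hZ : LayeredBisim P Q M M' Z) (ρ : Formula) :
    ∀ {n : ℕ} {w : M.W} {w' : M'.W}, Z w n w' → ρ.depth ≤ n →
      (PQFormula P Q ρ → M.Sat ρ w → M'.Sat ρ w') ∧
      (PQFormula Q P ρ → M'.Sat ρ w' → M.Sat ρ w) := by
  induction ρ with
  | var p =>
    intro n w w' hZw _
    refine ⟨fun hp => (hZ.1 w n w' hZw).1 p (pqFormula_var.1 hp), fun hp h => ?_⟩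
    by_contra hw
    exact (hZ.1 w n w' hZw).2 p (pqFormula_var.1 hp) hw h
  | bot => exact fun _ _ => ⟨fun _ => id, fun _ => id⟩
  | imp a b iha ihb =>
    intro n w w' hZw hd
    have hda : a.depth ≤ n := le_of_max_le_left hd
    have hdb : b.depth ≤ n := le_of_max_le_right hd
    exact ⟨fun h hab ha => (ihb hZw hdb).1 (pqFormula_imp.1 h).2
        (hab ((iha hZw hda).2 (pqFormula_imp.1 h).1 ha)),
      fun h hab ha => (ihb hZw hdb).2 (pqFormula_imp.1 h).2
        (hab ((iha hZw hda).1 (pqFormula_imp.1 h).1 ha))⟩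
  | box a iha =>
    intro n w w' hZw hd
    obtain ⟨n, rfl⟩ : ∃ m, n = m + 1 := Nat.exists_eq_add_one.2 ((Nat.succ_pos _).trans_le hd)
    have hda : a.depth ≤ n := Nat.le_of_succ_le_succ hd
    refine ⟨fun h ha x' hx' => ?_, fun h ha x hx => ?_⟩
    · obtain ⟨x, hx, hZx⟩ := hZ.2.2 w n w' hZw x' hx'
      exact (iha hZx hda).1 (pqFormula_box.1 h) (ha x hx)
    · obtain ⟨x', hx', hZx⟩ := hZ.2.1 w n w' hZw x hx
      exact (iha hZx hda).2 (pqFormula_box.1 h) (ha x' hx')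

/-- The model-theoretic counterpart of `ClassULIP`, with layered simulations in place of
inclusions of theories. -/
def HasLayeredAmalgamation (Cl : Set KripkeModel) : Prop :=
  ∀ (P Q PA QA PB QB : Finset ℕ), PA ∩ PB ⊆ P → QA ∩ QB ⊆ Q →
    ∀ M ∈ Cl, ∀ M' ∈ Cl, ∀ Z : M.W → ℕ → M'.W → Prop, LayeredBisim P Q M M' Z →
    ∀ w n w', Z w n w' → ∃ N ∈ Cl, ∃ v : N.W,
      (∃ ZA, LayeredBisim PA QA M N ZA ∧ ZA w n v) ∧
      ∃ ZB, LayeredBisim PB QB N M' ZB ∧ ∀ m, ZB v m w'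

namespace Amalgam

variable {M M' : KripkeModel}

structure Node (Z : M.W → ℕ → M'.W → Prop) where
  left : M.W
  level : ℕ
  right : M'.W
  related : Z left level right

variable (Z : M.W → ℕ → M'.W → Prop)

def edge : Node Z ⊕ M'.W → Node Z ⊕ M'.W → Prop
  | .inl c, .inl d => M.rel c.left d.left ∧ M'.rel c.right d.right ∧ c.level = d.level + 1
  | .inl c, .inr y => c.level = 0 ∧ M'.rel c.right y
  | .inr _, .inl _ => False
  | .inr x, .inr y => M'.rel x y

def proj : Node Z ⊕ M'.W → M'.W
  | .inl c => c.right
  | .inr y => y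

/-- The amalgam of `M` and `M'` along `Z`: a node of level `k + 1` steps to nodes of level `k`
along pairs of edges, a node of level `0` steps into a copy of `M'`; the edges are symmetrised
when `symm` holds. A node takes its `PA`-atoms from `M` and its `QB`-atoms from `M'`. -/
def model (PA QB : Finset ℕ) (symm : Prop) : KripkeModel where
  W := Node Z ⊕ M'.W
  nonempty := M'.nonempty.map Sum.inr
  rel a b := edge Z a b ∨ (symm ∧ edge Z b a)
  val
    | .inl c, p => (M.val c.left p ∧ p ∈ PA) ∨ (M'.val c.right p ∧ p ∈ QB)
    | .inr y, p => M'.val y p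

variable {Z}

lemma edge_proj : ∀ {a b : Node Z ⊕ M'.W}, edge Z a b → M'.rel (proj Z a) (proj Z b)
  | .inl _, .inl _, h => h.2.1
  | .inl _, .inr _, h => h.2
  | .inr _, .inr _, h => h

variable {P Q PA QA PB QB : Finset ℕ} {symm : Prop} (hZ : LayeredBisim P Q M M' Z)
include hZ

lemma model_serial (hM : ∀ w, ∃ x, M.rel w x) (hM' : ∀ w, ∃ x, M'.rel w x)
    (a : Node Z ⊕ M'.W) : ∃ b, (model Z PA QB symm).rel a b := by
  rcases a with c | y
  · rcases hk : c.level with _ | k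
    · obtain ⟨y, hy⟩ := hM' c.right
      exact ⟨.inr y, .inl ⟨hk, hy⟩⟩
    · obtain ⟨x, hx⟩ := hM c.left
      obtain ⟨x', hx', hZx⟩ := hZ.2.1 _ _ _ (hk ▸ c.related) x hx
      exact ⟨.inl ⟨x, k, x', hZx⟩, .inl ⟨hx, hx', hk⟩⟩
  · obtain ⟨y', hy'⟩ := hM' y
    exact ⟨.inr y', .inl hy'⟩

lemma layeredBisim_left (hQ : QA ∩ QB ⊆ Q) (hM : symm → ∀ u v, M.rel u v → M.rel v u) :
    LayeredBisim PA QA M (model Z PA QB symm)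
      fun x j a => ∃ c : Node Z, a = .inl c ∧ c.left = x ∧ j ≤ c.level := by
  refine ⟨?_, ?_, ?_⟩
  · rintro _ j _ ⟨c, rfl, rfl, -⟩
    refine ⟨fun p hp hv => .inl ⟨hv, hp⟩, fun q hq hv hval => ?_⟩
    rcases hval with ⟨h, -⟩ | ⟨h, hqB⟩
    · exact hv h
    · exact (hZ.1 _ _ _ c.related).2 q (hQ (Finset.mem_inter.2 ⟨hq, hqB⟩)) hv h
  · rintro _ j _ ⟨c, rfl, rfl, hj⟩ x hx
    obtain ⟨k, hk⟩ : ∃ k, c.level = k + 1 := Nat.exists_eq_add_one.2 (by omega)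
    obtain ⟨x', hx', hZx⟩ := hZ.2.1 _ _ _ (hk ▸ c.related) x hx
    exact ⟨.inl ⟨x, k, x', hZx⟩, .inl ⟨hx, hx', hk⟩, _, rfl, rfl, show j ≤ k by omega⟩
  · rintro _ j _ ⟨c, rfl, rfl, hj⟩ (d | y) hcd
    · rcases hcd with ⟨hx, -, hk⟩ | ⟨hs, hx, -, hk⟩
      · exact ⟨d.left, hx, d, rfl, rfl, by omega⟩
      · exact ⟨d.left, hM hs _ _ hx, d, rfl, rfl, by omega⟩
    · rcases hcd with ⟨hk, -⟩ | ⟨-, ⟨⟩⟩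
      omega

lemma layeredBisim_right (hP : PA ∩ PB ⊆ P) (hM' : symm → ∀ u v, M'.rel u v → M'.rel v u) :
    LayeredBisim PB QB (model Z PA QB symm) M' fun a _ y => proj Z a = y := by
  refine ⟨?_, ?_, ?_⟩
  · rintro (c | y) _ _ rfl
    · refine ⟨fun p hp hval => ?_, fun q hq hv h => hv (.inr ⟨h, hq⟩)⟩
      rcases hval with ⟨h, hpA⟩ | ⟨h, -⟩
      · exact (hZ.1 _ _ _ c.related).1 p (hP (Finset.mem_inter.2 ⟨hpA, hp⟩)) h
      · exact h
    · exact ⟨fun _ _ => id, fun _ _ => id⟩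
  · rintro a _ _ rfl b hab
    refine ⟨proj Z b, ?_, rfl⟩
    rcases hab with h | ⟨hs, h⟩
    exacts [edge_proj h, hM' hs _ _ (edge_proj h)]
  · rintro (c | y) _ _ rfl y' hy'
    · rcases hk : c.level with _ | k
      · exact ⟨.inr y', .inl ⟨hk, hy'⟩, rfl⟩
      · obtain ⟨x, hx, hZx⟩ := hZ.2.2 _ _ _ (hk ▸ c.related) y' hy'
        exact ⟨.inl ⟨x, k, y', hZx⟩, .inl ⟨hx, hy', hk⟩, rfl⟩
    · exact ⟨.inr y', .inl hy', rfl⟩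

lemma exists_layeredBisims (hP : PA ∩ PB ⊆ P) (hQ : QA ∩ QB ⊆ Q)
    (hM : symm → ∀ u v, M.rel u v → M.rel v u) (hM' : symm → ∀ u v, M'.rel u v → M'.rel v u)
    {w : M.W} {n : ℕ} {w' : M'.W} (hw : Z w n w') :
    (∃ ZA, LayeredBisim PA QA M (model Z PA QB symm) ZA ∧ ZA w n (.inl ⟨w, n, w', hw⟩)) ∧
      ∃ ZB, LayeredBisim PB QB (model Z PA QB symm) M' ZB ∧
        ∀ m, ZB (.inl ⟨w, n, w', hw⟩) m w' :=
  ⟨⟨_, layeredBisim_left hZ hQ hM, _, rfl, rfl, le_rfl⟩,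
    _, layeredBisim_right hZ hP hM', fun _ => rfl⟩

end Amalgam

lemma hasLayeredAmalgamation_serialModels : HasLayeredAmalgamation serialModels := by
  intro P Q PA QA PB QB hP hQ M hM M' hM' Z hZ w n w' hw
  exact ⟨Amalgam.model Z PA QB False, Amalgam.model_serial hZ hM hM', _,
    Amalgam.exists_layeredBisims hZ hP hQ False.elim False.elim hw⟩

lemma hasLayeredAmalgamation_serialSymmModels : HasLayeredAmalgamation serialSymmModels := by
  intro P Q PA QA PB QB hP hQ M hM M' hM' Z hZ w n w' hw
  refine ⟨Amalgam.model Z PA QB True, ⟨Amalgam.model_serial hZ hM.1 hM'.1, ?_⟩, _,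
    Amalgam.exists_layeredBisims hZ hP hQ (fun _ => hM.2) (fun _ => hM'.2) hw⟩
  rintro a b (h | ⟨-, h⟩)
  exacts [.inr ⟨trivial, h⟩, .inl h]

lemma Finset.inter_sdiff_union_subset {α : Type*} [DecidableEq α] {s t u : Finset α}
    (h : u ∩ t = ∅) : s ∩ (s \ t ∪ u) ⊆ s \ t := by
  intro x hx
  rw [Finset.mem_inter, Finset.mem_union] at hx
  refine hx.2.elim id fun hxu => Finset.mem_sdiff.2 ⟨hx.1, fun hxt => ?_⟩
  simpa [h] using Finset.mem_inter.2 ⟨hxu, hxt⟩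

open Classical in
noncomputable def uniformInterpolant (Cl : Set KripkeModel) (φ : Formula) (P Q : Finset ℕ) :
    Formula :=
  disjList ((charFormulas (φ.vpos \ P) (φ.vneg \ Q) φ.depth).filter fun χ =>
    ∃ M ∈ Cl, ∃ w, M.Sat φ w ∧ M.charFml (φ.vpos \ P) (φ.vneg \ Q) φ.depth w = χ).toList

section UniformInterpolant

variable {Cl : Set KripkeModel} {φ : Formula} {P Q : Finset ℕ}

lemma pqFormula_depth_uniformInterpolant :
    PQFormula (φ.vpos \ P) (φ.vneg \ Q) (uniformInterpolant Cl φ P Q) ∧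
      (uniformInterpolant Cl φ P Q).depth ≤ φ.depth := by
  classical
  rw [uniformInterpolant]
  refine ⟨pqFormula_disjList.2 fun χ hχ => ?_, depth_disjList_le fun χ hχ => ?_⟩
  · exact (pqFormula_depth_of_mem_charFormulas (Finset.mem_filter.1 (Finset.mem_toList.1 hχ)).1).1
  · exact (pqFormula_depth_of_mem_charFormulas (Finset.mem_filter.1 (Finset.mem_toList.1 hχ)).1).2

lemma sat_uniformInterpolant_iff {N : KripkeModel} {v : N.W} :
    N.Sat (uniformInterpolant Cl φ P Q) v ↔
      ∃ M ∈ Cl, ∃ w, M.Sat φ w ∧ N.Sat (M.charFml (φ.vpos \ P) (φ.vneg \ Q) φ.depth w) v := by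
  simp only [uniformInterpolant, KripkeModel.sat_disjList, Finset.mem_toList, Finset.mem_filter]
  constructor
  · rintro ⟨_, ⟨-, M, hM, w, hw, rfl⟩, hv⟩
    exact ⟨M, hM, w, hw, hv⟩
  · rintro ⟨M, hM, w, hw, hv⟩
    exact ⟨_, ⟨KripkeModel.charFml_mem_charFormulas _ w, M, hM, w, hw, rfl⟩, hv⟩

lemma validIn_imp_uniformInterpolant : ValidIn Cl (φ.imp (uniformInterpolant Cl φ P Q)) :=
  fun M hM w hw => sat_uniformInterpolant_iff.2 ⟨M, hM, w, hw, M.sat_charFml_self _ w⟩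

/-- A world `w'` satisfying the interpolant is simulated by some `w ⊨ φ`; amalgamating the two
gives a world of `Cl` that inherits `φ` from `w`, hence satisfies `ψ`, and passes `ψ` on to
`w'` because `ψ` avoids the atoms that are not shared. -/
lemma validIn_uniformInterpolant_imp (hCl : HasLayeredAmalgamation Cl) {ψ : Formula}
    (hψP : ψ.vpos ∩ P = ∅) (hψQ : ψ.vneg ∩ Q = ∅) (h : ValidIn Cl (φ.imp ψ)) :
    ValidIn Cl ((uniformInterpolant Cl φ P Q).imp ψ) := by
  intro M' hM' w' hw'
  obtain ⟨M, hM, w, hw, hww'⟩ := sat_uniformInterpolant_iff.1 hw'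
  obtain ⟨N, hN, v, ⟨ZA, hZA, hwv⟩, ZB, hZB, hvw'⟩ :=
    hCl _ _ φ.vpos φ.vneg (φ.vpos \ P ∪ ψ.vpos) (φ.vneg \ Q ∪ ψ.vneg)
      (Finset.inter_sdiff_union_subset hψP) (Finset.inter_sdiff_union_subset hψQ)
      M hM M' hM' _ KripkeModel.layeredBisim_sat_charFml w φ.depth w' hww'
  have hφv : N.Sat φ v := (hZA.sat_transfer φ hwv le_rfl).1 ⟨subset_rfl, subset_rfl⟩ hw
  exact (hZB.sat_transfer ψ (hvw' ψ.depth) le_rfl).1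
    ⟨Finset.subset_union_right, Finset.subset_union_right⟩ (h N hN v hφv)

theorem isULInterpolant_uniformInterpolant {L : Set Formula}
    (hL : ∀ φ, φ ∈ L ↔ ValidIn Cl φ) (hCl : HasLayeredAmalgamation Cl) :
    IsULInterpolant L φ P Q (uniformInterpolant Cl φ P Q) :=
  ⟨pqFormula_depth_uniformInterpolant.1.1, pqFormula_depth_uniformInterpolant.1.2,
    (hL _).2 validIn_imp_uniformInterpolant,
    fun _ hψP hψQ h => (hL _).2 (validIn_uniformInterpolant_imp hCl hψP hψQ ((hL _).1 h))⟩

end UniformInterpolant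

theorem ulip_and_depth_le_of_hasLayeredAmalgamation {L : Set Formula} {Cl : Set KripkeModel}
    (hL : ∀ φ, φ ∈ L ↔ ValidIn Cl φ) (hCl : HasLayeredAmalgamation Cl) :
    ULIP L ∧ ∀ (φ : Formula) (P Q : Finset ℕ), ∃ θ : Formula,
      IsULInterpolant L φ P Q θ ∧ θ.depth ≤ φ.depth :=
  ⟨fun _ _ _ => ⟨_, isULInterpolant_uniformInterpolant hL hCl⟩,
    fun _ _ _ => ⟨_, isULInterpolant_uniformInterpolant hL hCl,
      pqFormula_depth_uniformInterpolant.2⟩⟩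

/-- KD and KDB enjoy ULIP, with interpolants of depth at most d(φ). -/
theorem ulip_KD_KDB :
    (ULIP TheoryKD ∧ ∀ (φ : Formula) (P Q : Finset ℕ), ∃ θ : Formula,
        IsULInterpolant TheoryKD φ P Q θ ∧ θ.depth ≤ φ.depth) ∧
    (ULIP TheoryKDB ∧ ∀ (φ : Formula) (P Q : Finset ℕ), ∃ θ : Formula,
        IsULInterpolant TheoryKDB φ P Q θ ∧ θ.depth ≤ φ.depth) :=
  ⟨ulip_and_depth_le_of_hasLayeredAmalgamation (fun _ => mem_theoryKD_iff)
      hasLayeredAmalgamation_serialModels,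
    ulip_and_depth_le_of_hasLayeredAmalgamation (fun _ => mem_theoryKDB_iff)
      hasLayeredAmalgamation_serialSymmModels⟩
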